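/- Let B_M(u, v) = u₀v₀ − u₁v₁ − u₂v₂ − u₃v₃ be the Minkowski bilinear form on ℝ⁴. Let h : {x ∈ ℝ³ : ‖x‖ < 1} → ℝ⁴ be defined by h(x) = ((1 + ‖x‖²)·γ₀ + 2·ĵ(x))/(1 − ‖x‖²), where γ₀ is the first standard basis vector of ℝ⁴ and ĵ : ℝ³ → ℝ⁴ embeds onto the last three coordinates. Then h is differentiable at every x with ‖x‖ < 1, and for all such x and all v ∈ ℝ³, B_M((fderiv h x) v, (fderiv h x) v) = −4‖v‖²/(1 − ‖x‖²)²; that is, the induced metric on the hyperboloid L³ pulls back to the hyperbolic metric −4 dx²/(1 − ‖x‖²)² on the open unit ball. -/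

import Mathlib

/-- The Minkowski bilinear form on `Fin 4 → ℝ`. -/
def BM (u v : Fin 4 → ℝ) : ℝ := u 0 * v 0 - u 1 * v 1 - u 2 * v 2 - u 3 * v 3

/-- The embedding of ℝ³ onto the last three coordinates of `Fin 4 → ℝ`. -/
noncomputable def jEmb4 (x : EuclideanSpace ℝ (Fin 3)) : Fin 4 → ℝ :=
  Fin.cons 0 (WithLp.equiv 2 (Fin 3 → ℝ) x)

/-!
Write `g = 1 - ‖x‖²` and `a = ⟪x, v⟫`. By the quotient rule the differential of `h` is
`v ↦ (4a/g²) γ₀ + ĵ((2/g) v + (4a/g²) x)`, and `B_M(t γ₀ + ĵ w, t γ₀ + ĵ w) = t² - ‖w‖²`.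
Expanding, the `a²` terms come with the factor `16 (1 - g - ‖x‖²)/g⁴ = 0`,
leaving `-4‖v‖²/g²`.
-/

open RealInnerProductSpace

lemma jEmb4_eq (y : EuclideanSpace ℝ (Fin 3)) : jEmb4 y = ![0, y 0, y 1, y 2] := by
  ext i; fin_cases i <;> rfl

noncomputable def jEmb4L : EuclideanSpace ℝ (Fin 3) →L[ℝ] (Fin 4 → ℝ) :=
  LinearMap.toContinuousLinearMap
    { toFun := jEmb4
      map_add' := fun x y => by ext i; fin_cases i <;> simp [jEmb4_eq]
      map_smul' := fun c x => by ext i; fin_cases i <;> simp [jEmb4_eq] }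

@[simp]
lemma jEmb4L_apply (x : EuclideanSpace ℝ (Fin 3)) : jEmb4L x = jEmb4 x := rfl

lemma BM_smul_single_add_jEmb4 (a b : ℝ) (y z : EuclideanSpace ℝ (Fin 3)) :
    BM (a • Pi.single 0 1 + jEmb4 y) (b • Pi.single 0 1 + jEmb4 z) = a * b - ⟪y, z⟫ := by
  simp only [BM, jEmb4_eq, Pi.add_apply, Pi.smul_apply, Pi.single_eq_same, ne_eq,
    one_ne_zero, not_false_eq_true, Pi.single_eq_of_ne, Fin.reduceEq, Matrix.cons_val,
    Matrix.cons_val_zero, Matrix.cons_val_one, smul_eq_mul, mul_one, mul_zero, add_zero,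
    zero_add, PiLp.inner_apply, RCLike.inner_apply, Real.ringHom_apply, Fin.sum_univ_three]
  ring

section

variable {E F : Type*} [NormedAddCommGroup E] [InnerProductSpace ℝ E]
  [NormedAddCommGroup F] [NormedSpace ℝ F]

lemma HasFDerivAt.inv_one_sub_norm_sq_smul {f : E → F} {f' : E →L[ℝ] F} {x : E}
    (hf : HasFDerivAt f f' x) (hx : 1 - ‖x‖ ^ 2 ≠ 0) :
    HasFDerivAt (fun y => (1 - ‖y‖ ^ 2)⁻¹ • f y)
      ((1 - ‖x‖ ^ 2)⁻¹ • f' + (2 / (1 - ‖x‖ ^ 2) ^ 2) • (innerSL ℝ x).smulRight (f x)) x := by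
  have hg : HasFDerivAt (fun y : E => 1 - ‖y‖ ^ 2) (-(2 • innerSL ℝ x)) x :=
    ((hasFDerivAt_const (1 : ℝ) x).sub (hasFDerivAt_id x).norm_sq).congr_fderiv (zero_sub _)
  refine (((hasDerivAt_inv hx).comp_hasFDerivAt x hg).smul hf).congr_fderiv ?_
  ext v
  simp only [add_apply, smul_apply, ContinuousLinearMap.smulRight_apply, innerSL_apply_apply,
    neg_apply, Function.comp_apply]
  module

lemma hasFDerivAt_stereographic (e : F) (J : E →L[ℝ] F) {x : E} (hx : 1 - ‖x‖ ^ 2 ≠ 0) :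
    HasFDerivAt (fun y => (1 - ‖y‖ ^ 2)⁻¹ • ((1 + ‖y‖ ^ 2) • e + (2 : ℝ) • J y))
      ((4 / (1 - ‖x‖ ^ 2) ^ 2) • (innerSL ℝ x).smulRight e +
        J.comp ((2 / (1 - ‖x‖ ^ 2)) • ContinuousLinearMap.id ℝ E +
          (4 / (1 - ‖x‖ ^ 2) ^ 2) • (innerSL ℝ x).smulRight x)) x := by
  have hf : HasFDerivAt (fun y => (1 + ‖y‖ ^ 2) • e + (2 : ℝ) • J y)
      ((2 : ℝ) • ((innerSL ℝ x).smulRight e + J)) x := by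
    refine ((((hasFDerivAt_const (1 : ℝ) x).add (hasFDerivAt_id x).norm_sq).smul_const e).add
      (J.hasFDerivAt.const_smul (2 : ℝ))).congr_fderiv ?_
    ext v
    simp [two_smul, add_smul]
  refine (hf.inv_one_sub_norm_sq_smul hx).congr_fderiv ?_
  ext v
  simp only [add_apply, smul_apply, ContinuousLinearMap.smulRight_apply, innerSL_apply_apply,
    ContinuousLinearMap.comp_apply, ContinuousLinearMap.id_apply, map_add, map_smul]
  match_scalars <;> field_simp <;> ring

lemma sq_sub_norm_sq_stereographic (x v : E) (hx : 1 - ‖x‖ ^ 2 ≠ 0) :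
    (4 / (1 - ‖x‖ ^ 2) ^ 2 * ⟪x, v⟫) ^ 2
      - ‖(2 / (1 - ‖x‖ ^ 2)) • v + (4 / (1 - ‖x‖ ^ 2) ^ 2 * ⟪x, v⟫) • x‖ ^ 2
      = -4 * ‖v‖ ^ 2 / (1 - ‖x‖ ^ 2) ^ 2 := by
  simp only [norm_add_sq_real, norm_smul, real_inner_smul_left, real_inner_smul_right,
    real_inner_comm x v, Real.norm_eq_abs, mul_pow, sq_abs]
  field_simp
  ring

end

/-- The parametrization `h x = ((1 + ‖x‖²) γ₀ + 2 ĵ(x))/(1 − ‖x‖²)` of the hyperboloid L³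
over the open unit ball of ℝ³ is differentiable at every `x` with `‖x‖ < 1`, and
`B_M((fderiv h x) v, (fderiv h x) v) = −4‖v‖²/(1 − ‖x‖²)²`: the induced metric pulls back
to the hyperbolic metric `−4 dx²/(1 − ‖x‖²)²`. -/
theorem stereographic_hyperbolic_metric
    (γ₀ : Fin 4 → ℝ) (hγ₀ : γ₀ = Pi.single 0 1)
    (h : EuclideanSpace ℝ (Fin 3) → (Fin 4 → ℝ))
    (hh : ∀ x, h x = (1 - ‖x‖ ^ 2)⁻¹ • ((1 + ‖x‖ ^ 2) • γ₀ + (2 : ℝ) • jEmb4 x)) :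
    ∀ x : EuclideanSpace ℝ (Fin 3), ‖x‖ < 1 → DifferentiableAt ℝ h x ∧
      ∀ v : EuclideanSpace ℝ (Fin 3),
        BM (fderiv ℝ h x v) (fderiv ℝ h x v) = -4 * ‖v‖ ^ 2 / (1 - ‖x‖ ^ 2) ^ 2 := by
  intro x hx
  have hx' : 1 - ‖x‖ ^ 2 ≠ 0 := by nlinarith [norm_nonneg x]
  have hH := hasFDerivAt_stereographic γ₀ jEmb4L hx'
  simp only [jEmb4L_apply, ← hh] at hH
  refine ⟨hH.differentiableAt, fun v => ?_⟩
  simp only [hH.fderiv, add_apply, smul_apply, ContinuousLinearMap.smulRight_apply,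
    innerSL_apply_apply, smul_smul, ContinuousLinearMap.comp_apply, ContinuousLinearMap.id_apply,
    jEmb4L_apply, hγ₀]
  rw [BM_smul_single_add_jEmb4, ← sq, real_inner_self_eq_norm_sq]
  exact sq_sub_norm_sq_stereographic x v hx'
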